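/- Let G = {A | C} be a short dicotic game with exactly one left option A and one right option C, where A is an atomic-reversible left option (A has a right option B with no left options and B ≼ G (mod D⁻)) and C is an atomic-reversible right option (C has a left option B' with no right options and B' ≽ G (mod D⁻)). Then G = 0 (mod D⁻). -/

import Mathlib

/-! `SetTheory.PGame` has been removed from Mathlib; the following reproduces the
definitions of the December 2024 Mathlib that this file uses, with their old meaning. -/

universe u

namespace SetTheory

inductive PGame : Type (u + 1)
  | mk : ∀ α β : Type u, (α → PGame) → (β → PGame) → PGame

namespace PGame

def LeftMoves : PGame → Type u
  | mk l _ _ _ => l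

def RightMoves : PGame → Type u
  | mk _ r _ _ => r

def moveLeft : ∀ g : PGame, LeftMoves g → PGame
  | mk _l _ L _ => L

def moveRight : ∀ g : PGame, RightMoves g → PGame
  | mk _ _r _ R => R

inductive IsOption : PGame → PGame → Prop
  | moveLeft {x : PGame} (i : x.LeftMoves) : IsOption (x.moveLeft i) x
  | moveRight {x : PGame} (i : x.RightMoves) : IsOption (x.moveRight i) x

noncomputable def birthday : PGame.{u} → Ordinal.{u}
  | ⟨_, _, xL, xR⟩ =>
    max (Ordinal.lsub.{u, u} fun i => birthday (xL i)) (Ordinal.lsub.{u, u} fun i => birthday (xR i))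

theorem birthday_moveLeft_lt {x : PGame} (i : x.LeftMoves) :
    (x.moveLeft i).birthday < x.birthday := by
  cases x
  rw [birthday]
  exact lt_max_of_lt_left (Ordinal.lt_lsub _ i)

theorem birthday_moveRight_lt {x : PGame} (i : x.RightMoves) :
    (x.moveRight i).birthday < x.birthday := by
  cases x
  rw [birthday]
  exact lt_max_of_lt_right (Ordinal.lt_lsub _ i)

instance : Zero PGame :=
  ⟨⟨PEmpty, PEmpty, PEmpty.elim, PEmpty.elim⟩⟩

def star : PGame.{u} :=
  ⟨PUnit, PUnit, fun _ => 0, fun _ => 0⟩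

def neg : PGame → PGame
  | ⟨l, r, L, R⟩ => ⟨r, l, fun i => neg (R i), fun i => neg (L i)⟩

instance : Neg PGame :=
  ⟨neg⟩

noncomputable instance : Add PGame.{u} :=
  ⟨fun x y => by
    induction x generalizing y with | mk xl xr _ _ IHxl IHxr => _
    induction y with | mk yl yr yL yR IHyl IHyr => _
    have y := mk yl yr yL yR
    refine ⟨xl ⊕ yl, xr ⊕ yr, Sum.rec ?_ ?_, Sum.rec ?_ ?_⟩
    · exact fun i => IHxl i y
    · exact IHyl
    · exact fun i => IHxr i y
    · exact IHyr⟩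

def Identical : PGame.{u} → PGame.{u} → Prop
  | mk _ _ xL xR, mk _ _ yL yR =>
    Relator.BiTotal (fun i j ↦ Identical (xL i) (yL j)) ∧
      Relator.BiTotal (fun i j ↦ Identical (xR i) (yR j))

end PGame

end SetTheory

open SetTheory PGame

namespace MisereDicot

def Follower (G' G : PGame) : Prop := Relation.ReflTransGen PGame.IsOption G' G

def IsShort (G : PGame) : Prop :=
  ∀ G', Follower G' G → Finite G'.LeftMoves ∧ Finite G'.RightMoves

def Dicot (G : PGame) : Prop :=
  ∀ G', Follower G' G → (IsEmpty G'.LeftMoves ↔ IsEmpty G'.RightMoves)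

mutual
def LeftWinsFirst (G : PGame) : Prop :=
  IsEmpty G.LeftMoves ∨ ∃ i, ¬ RightWinsFirst (G.moveLeft i)
termination_by G.birthday
decreasing_by exact PGame.birthday_moveLeft_lt i

def RightWinsFirst (G : PGame) : Prop :=
  IsEmpty G.RightMoves ∨ ∃ j, ¬ LeftWinsFirst (G.moveRight j)
termination_by G.birthday
decreasing_by exact PGame.birthday_moveRight_lt j
end

inductive MOutcome : Type
  | L | N | P | R
deriving DecidableEq

instance : LE MOutcome := ⟨fun a b => a = b ∨ a = .R ∨ b = .L⟩

noncomputable def outcome (G : PGame) : MOutcome := by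
  classical
  exact if LeftWinsFirst G then (if RightWinsFirst G then .N else .L)
        else (if RightWinsFirst G then .R else .P)

def Dge (G H : PGame) : Prop :=
  ∀ X : PGame, IsShort X → Dicot X → outcome (H + X) ≤ outcome (G + X)

def Deq (G H : PGame) : Prop :=
  ∀ X : PGame, IsShort X → Dicot X → outcome (G + X) = outcome (H + X)

def Dgt (G H : PGame) : Prop := Dge G H ∧ ¬ Deq G H

def DInvertible (G : PGame) : Prop :=
  ∃ H : PGame, IsShort H ∧ Dicot H ∧ Deq (G + H) 0

/-- The left option `G^L_i` is reversible through its right option `(G^L_i)^R_j ≼ G`. -/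
def LeftReversibleAt (G : PGame) (i : G.LeftMoves) (j : (G.moveLeft i).RightMoves) : Prop :=
  Dge G ((G.moveLeft i).moveRight j)

def RightReversibleAt (G : PGame) (j : G.RightMoves) (i : (G.moveRight j).LeftMoves) : Prop :=
  Dge ((G.moveRight j).moveLeft i) G

/-- `G` has a dominated left option (removable by the Domination theorem). -/
def LeftDominated (G : PGame) : Prop :=
  ∃ i i' : G.LeftMoves, ¬ (G.moveLeft i).Identical (G.moveLeft i') ∧
    Dge (G.moveLeft i') (G.moveLeft i)

def RightDominated (G : PGame) : Prop :=
  ∃ j j' : G.RightMoves, ¬ (G.moveRight j).Identical (G.moveRight j') ∧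
    Dge (G.moveRight j) (G.moveRight j')

/-- `G` has a non-atomic reversible left option (bypassable). -/
def LeftNonAtomicReversible (G : PGame) : Prop :=
  ∃ i j, LeftReversibleAt G i j ∧ Nonempty ((G.moveLeft i).moveRight j).LeftMoves

def RightNonAtomicReversible (G : PGame) : Prop :=
  ∃ j i, RightReversibleAt G j i ∧ Nonempty ((G.moveRight j).moveLeft i).RightMoves

/-- `G` has an atomic-reversible left option to which the atomic-reversibility
replacement applies nontrivially (i.e. changing the set of options): either some
other left option is a winning first move for Left (so the option is removable),
or the option is not already `*`. -/
def LeftAtomicReducible (G : PGame) : Prop :=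
  ∃ i j, LeftReversibleAt G i j ∧ IsEmpty ((G.moveLeft i).moveRight j).LeftMoves ∧
    ((∃ i', ¬ (G.moveLeft i').Identical (G.moveLeft i) ∧ ¬ RightWinsFirst (G.moveLeft i')) ∨
      ¬ (G.moveLeft i).Identical star)

def RightAtomicReducible (G : PGame) : Prop :=
  ∃ j i, RightReversibleAt G j i ∧ IsEmpty ((G.moveRight j).moveLeft i).RightMoves ∧
    ((∃ j', ¬ (G.moveRight j').Identical (G.moveRight j) ∧ ¬ LeftWinsFirst (G.moveRight j')) ∨
      ¬ (G.moveRight j).Identical star)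

/-- The Substitution theorem applies to `G`: `G = {A | C}` with `A` an
atomic-reversible left option and `C` an atomic-reversible right option. -/
def SubstitutionReducible (G : PGame) : Prop :=
  (∀ i i' : G.LeftMoves, (G.moveLeft i).Identical (G.moveLeft i')) ∧
  (∀ j j' : G.RightMoves, (G.moveRight j).Identical (G.moveRight j')) ∧
  (∃ i j, LeftReversibleAt G i j ∧ IsEmpty ((G.moveLeft i).moveRight j).LeftMoves) ∧
  (∃ j i, RightReversibleAt G j i ∧ IsEmpty ((G.moveRight j).moveLeft i).RightMoves)

/-- `G` is in canonical form: no follower admits any of the misère-dicot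
simplifications (domination, non-atomic reversibility, atomic reversibility,
substitution) producing an equivalent game with a different set of options. -/
def CanonicalForm (G : PGame) : Prop :=
  ∀ G', Follower G' G →
    ¬ (LeftDominated G' ∨ RightDominated G' ∨
       LeftNonAtomicReversible G' ∨ RightNonAtomicReversible G' ∨
       LeftAtomicReducible G' ∨ RightAtomicReducible G' ∨
       SubstitutionReducible G')

/-- The game `*2 = {0, * | 0, *}`. -/
def star2 : PGame :=
  PGame.mk Bool Bool (fun b => cond b star 0) (fun b => cond b star 0)

open Classical in
/-- The adjoint `G°` of `G`. -/
noncomputable def adjoint : PGame → PGame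
  | PGame.mk l r L R =>
    if IsEmpty l ∧ IsEmpty r then star
    else if IsEmpty l then PGame.mk r PUnit (fun j => adjoint (R j)) (fun _ => 0)
    else if IsEmpty r then PGame.mk PUnit l (fun _ => 0) (fun i => adjoint (L i))
    else PGame.mk r l (fun j => adjoint (R j)) (fun i => adjoint (L i))

/-- A universe of short games: a class closed under taking options, disjunctive
sums and conjugates. -/
structure GameUniverse where
  mem : PGame → Prop
  short_mem : ∀ G, mem G → IsShort G
  isOption_mem : ∀ G G', mem G → PGame.IsOption G' G → mem G'
  add_mem : ∀ G H, mem G → mem H → mem (G + H)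
  neg_mem : ∀ G, mem G → mem (-G)

/-- `G ≽ H` modulo the universe `U`. -/
def UGe (U : GameUniverse) (G H : PGame) : Prop :=
  ∀ X : PGame, U.mem X → outcome (H + X) ≤ outcome (G + X)

/-- `G = H` modulo the universe `U`. -/
def UEq (U : GameUniverse) (G H : PGame) : Prop :=
  ∀ X : PGame, U.mem X → outcome (G + X) = outcome (H + X)

/-- `G ≻ H` modulo the universe `U`. -/
def UGt (U : GameUniverse) (G H : PGame) : Prop := UGe U G H ∧ ¬ UEq U G H

/-- `J` is invertible in the universe `U`. -/
def UInvertible (U : GameUniverse) (J : PGame) : Prop :=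
  ∃ J' : PGame, U.mem J' ∧ UEq U (J + J') 0

/-! An atomic reversing option of a dicot has no moves for either player, so it is equivalent to
`0`; the two reversibility hypotheses then squeeze `G` between `0` and `0`. -/

theorem MOutcome.le_antisymm {a b : MOutcome} (hab : a ≤ b) (hba : b ≤ a) : a = b := by
  rcases hab with h | h | h <;> rcases hba with h' | h' | h' <;> simp_all

theorem winsFirst_add_of_isEmpty {E : PGame} (hl : IsEmpty E.LeftMoves)
    (hr : IsEmpty E.RightMoves) (X : PGame) :
    (LeftWinsFirst (E + X) ↔ LeftWinsFirst X) ∧ (RightWinsFirst (E + X) ↔ RightWinsFirst X) := by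
  obtain ⟨el, er, eL, eR⟩ := E
  induction X with
  | mk xl xr xL xR ihl ihr =>
    have hL : ∀ i, (mk el er eL eR + mk xl xr xL xR).moveLeft (.inr i) = mk el er eL eR + xL i :=
      fun _ => rfl
    have hR : ∀ j, (mk el er eL eR + mk xl xr xL xR).moveRight (.inr j) = mk el er eL eR + xR j :=
      fun _ => rfl
    rw [LeftWinsFirst, LeftWinsFirst, RightWinsFirst, RightWinsFirst]
    change IsEmpty el at hl
    change IsEmpty er at hr
    simp only [LeftMoves, RightMoves, isEmpty_sum, Sum.exists, hL, hR, fun i => (ihl i).2,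
      fun j => (ihr j).1]
    simp [hl, hr, moveLeft, moveRight]

theorem outcome_add_of_isEmpty {E : PGame} (hl : IsEmpty E.LeftMoves)
    (hr : IsEmpty E.RightMoves) (X : PGame) : outcome (E + X) = outcome X := by
  obtain ⟨hLeft, hRight⟩ := winsFirst_add_of_isEmpty hl hr X
  classical
  unfold outcome
  simp only [hLeft, hRight]

theorem deq_zero_of_isEmpty {E : PGame} (hl : IsEmpty E.LeftMoves)
    (hr : IsEmpty E.RightMoves) : Deq E 0 := fun X _ _ => by
  rw [outcome_add_of_isEmpty hl hr, outcome_add_of_isEmpty (inferInstanceAs (IsEmpty PEmpty))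
    (inferInstanceAs (IsEmpty PEmpty))]

theorem Dicot.moveLeft {G : PGame} (hG : Dicot G) (i : G.LeftMoves) : Dicot (G.moveLeft i) :=
  fun _ hG' => hG _ (hG'.tail (.moveLeft i))

theorem Dicot.moveRight {G : PGame} (hG : Dicot G) (j : G.RightMoves) : Dicot (G.moveRight j) :=
  fun _ hG' => hG _ (hG'.tail (.moveRight j))

theorem Dicot.isEmpty_leftMoves_iff {G : PGame} (hG : Dicot G) :
    IsEmpty G.LeftMoves ↔ IsEmpty G.RightMoves :=
  hG G .refl

theorem Deq.symm {G H : PGame} (h : Deq G H) : Deq H G := fun X hX hdX => (h X hX hdX).symm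

theorem Dge.trans_deq {G H K : PGame} (hGH : Dge G H) (hHK : Deq H K) : Dge G K :=
  fun X hX hdX => hHK X hX hdX ▸ hGH X hX hdX

theorem Deq.trans_dge {G H K : PGame} (hGH : Deq G H) (hHK : Dge H K) : Dge G K :=
  fun X hX hdX => hGH X hX hdX ▸ hHK X hX hdX

theorem Deq.of_dge_of_dge {G H : PGame} (hGH : Dge G H) (hHG : Dge H G) : Deq G H :=
  fun X hX hdX => MOutcome.le_antisymm (hHG X hX hdX) (hGH X hX hdX)

/-- Substitution: if `G = {A | C}` with `A` an atomic-reversible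
left option and `C` an atomic-reversible right option, then `G = 0` (mod `D⁻`). -/
theorem stmt12 (A C : PGame)
    (hs : IsShort (PGame.mk PUnit PUnit (fun _ => A) (fun _ => C)))
    (hd : Dicot (PGame.mk PUnit PUnit (fun _ => A) (fun _ => C)))
    (jB : A.RightMoves) (hBatom : IsEmpty (A.moveRight jB).LeftMoves)
    (hBrev : Dge (PGame.mk PUnit PUnit (fun _ => A) (fun _ => C)) (A.moveRight jB))
    (iB : C.LeftMoves) (hB'atom : IsEmpty (C.moveLeft iB).RightMoves)
    (hB'rev : Dge (C.moveLeft iB) (PGame.mk PUnit PUnit (fun _ => A) (fun _ => C))) :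
    Deq (PGame.mk PUnit PUnit (fun _ => A) (fun _ => C)) 0 := by
  have hdA : Dicot A := hd.moveLeft PUnit.unit
  have hdC : Dicot C := hd.moveRight PUnit.unit
  have hB : Deq (A.moveRight jB) 0 :=
    deq_zero_of_isEmpty hBatom ((hdA.moveRight jB).isEmpty_leftMoves_iff.mp hBatom)
  have hB' : Deq (C.moveLeft iB) 0 :=
    deq_zero_of_isEmpty ((hdC.moveLeft iB).isEmpty_leftMoves_iff.mpr hB'atom) hB'atom
  exact .of_dge_of_dge (hBrev.trans_deq hB) (hB'.symm.trans_dge hB'rev)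

end MisereDicot
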